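/- arXiv:2104.03162 — 5 statements merged into one kernel-verified Lean document; each statement's English description precedes it below -/
import Mathlib

section
/- For all positive integers P, n, m and every integer k with 1 ≤ k ≤ n+1: T^k(P + 2^{n+1}·m) = T^k(P) + 2^{n+1-k} · 3^{M_{k-1}(P)} · m, where M_{k-1}(P) is the number of odd elements among P, T(P), ..., T^{k-1}(P). -/
/-- The Collatz (Syracuse) map. -/
def T (N : ℕ) : ℕ := if N % 2 = 0 then N / 2 else (3 * N + 1) / 2

/-- Parity indicator: 1 if odd, 0 if even. -/
def i0 (N : ℕ) : ℕ := if N % 2 = 1 then 1 else 0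

/-- Parity indicator of the k-th iterate. -/
def ik (k P : ℕ) : ℕ := i0 (T^[k] P)

/-- Number of odd terms among P, T(P), ..., Tⁿ(P). -/
def M (n P : ℕ) : ℕ := ∑ k ∈ Finset.range (n + 1), ik k P

/-- Secondary cumulative transformational coefficient. -/
def phi (P : ℕ) : ℕ → ℚ
  | 0 => 0
  | n + 1 => (3 : ℚ) ^ ik n P / 2 * phi P n + (ik n P : ℚ) / 2


lemma Tstep (N m e : ℕ) : T (N + 2^(e+1) * m) = T N + 2^e * 3^(i0 N) * m := by
  have h1 : (2:ℕ)^(e+1) * m = 2 * (2^e * m) := by ring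
  have h2 : (2:ℕ)^e * 3^(i0 N) * m = 3^(i0 N) * (2^e * m) := by ring
  rw [h1, h2]
  generalize (2:ℕ)^e * m = b
  unfold T i0
  rcases Nat.even_or_odd N with h | h
  · have hN : N % 2 = 0 := Nat.even_iff.mp h
    simp only [hN]
    norm_num
    split_ifs <;> omega
  · have hN : N % 2 = 1 := Nat.odd_iff.mp h
    simp only [hN]
    norm_num
    split_ifs <;> omega

theorem stmt4 (P n m : ℕ) (hP : 0 < P) (hn : 0 < n) (hm : 0 < m)
    (k : ℕ) (hk1 : 1 ≤ k) (hk2 : k ≤ n + 1) :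
    T^[k] (P + 2 ^ (n + 1) * m) = T^[k] P + 2 ^ (n + 1 - k) * 3 ^ M (k - 1) P * m := by
  induction k with
  | zero => omega
  | succ k ih =>
    rcases Nat.eq_zero_or_pos k with rfl | hk
    · simp only [zero_add, Function.iterate_one, Nat.add_sub_cancel]
      rw [Tstep P m n]
      have : M 0 P = i0 P := by simp [M, ik]
      rw [this]
    · have ih' := ih hk (by omega)
      have hM : M k P = M (k - 1) P + ik k P := by
        have hk' : k - 1 + 1 = k := by omega
        unfold M
        rw [Finset.sum_range_succ, hk']
      have e1 : n + 1 - k = (n - k) + 1 := by omega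
      have e2 : n + 1 - (k + 1) = n - k := by omega
      rw [Function.iterate_succ_apply', Function.iterate_succ_apply', ih', e1,
        show (2:ℕ)^((n-k)+1) * 3^(M (k-1) P) * m = 2^((n-k)+1) * (3^(M (k-1) P) * m) from by ring,
        Tstep (T^[k] P) (3 ^ M (k-1) P * m) (n - k), e2, Nat.add_sub_cancel, hM]
      have hik : ik k P = i0 (T^[k] P) := rfl
      rw [pow_add, hik]
      ring
end

section
/- For all positive integers P, n, m and every integer k with 0 ≤ k ≤ n: T^k(P + 2^{n+1}·m) and T^k(P) have the same parity, i.e., i_k(P + 2^{n+1}m) = i_k(P). -/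
lemma T_key (k : ℕ) : ∀ j a P : ℕ, ∃ b, T^[k] (P + 2 ^ (k + j) * a) = T^[k] P + 2 ^ j * b := by
  induction k with
  | zero => intro j a P; exact ⟨a, by simp⟩
  | succ k ih =>
    intro j a P
    obtain ⟨b, hb⟩ := ih (j + 1) a P
    have harg : k + 1 + j = k + (j + 1) := by omega
    rw [Function.iterate_succ_apply', Function.iterate_succ_apply', harg, hb]
    set Q := T^[k] P with hQ
    rw [pow_succ]
    set c := 2 ^ j * b with hc
    have hcc : 2 ^ j * 2 * b = 2 * c := by ring
    rw [hcc]
    by_cases h : Q % 2 = 0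
    · refine ⟨b, ?_⟩
      have h2 : (Q + 2 * c) % 2 = 0 := by omega
      simp only [T, h2, h, if_true]
      omega
    · refine ⟨3 * b, ?_⟩
      have h2 : (Q + 2 * c) % 2 ≠ 0 := by omega
      simp only [T, h2, h, if_false]
      have : 2 ^ j * (3 * b) = 3 * c := by rw [hc]; ring
      rw [this]
      omega

theorem stmt5 (P n m : ℕ) (hP : 0 < P) (hn : 0 < n) (hm : 0 < m)
    (k : ℕ) (hk : k ≤ n) :
    ik k (P + 2 ^ (n + 1) * m) = ik k P := by
  obtain ⟨b, hb⟩ := T_key k (n + 1 - k) m P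
  have harg : k + (n + 1 - k) = n + 1 := by omega
  rw [harg] at hb
  unfold ik i0
  rw [hb]
  have h2 : 2 ^ (n + 1 - k) * b % 2 = 0 := by
    have : (2 : ℕ) ∣ 2 ^ (n + 1 - k) * b :=
      Dvd.dvd.mul_right (dvd_pow_self 2 (by omega)) b
    omega
  have hmod : (T^[k] P + 2 ^ (n + 1 - k) * b) % 2 = T^[k] P % 2 := by omega
  rw [hmod]
end

section
/- Let P₁ and P₂ be positive integers of the same parity, and let n be a positive integer. The parity vectors of length n of P₁ and P₂ agree (i.e., i_k(P₁) = i_k(P₂) for all 1 ≤ k ≤ n) if and only if P₂ ≡ P₁ (mod 2^{n+1}). -/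
lemma i0_eq_iff (a b : ℕ) : i0 a = i0 b ↔ a % 2 = b % 2 := by
  unfold i0; split <;> split <;> omega

lemma T_two_mul (P : ℕ) : 2 * T P = if P % 2 = 0 then P else 3 * P + 1 := by
  unfold T; split <;> omega

lemma key (n P₁ P₂ : ℕ) (hpar : P₁ % 2 = P₂ % 2) :
    ((T P₁ : ℤ) ≡ (T P₂ : ℤ) [ZMOD (2 ^ n : ℤ)]) ↔
      ((P₁ : ℤ) ≡ (P₂ : ℤ) [ZMOD (2 ^ (n + 1) : ℤ)]) := by
  rw [Int.modEq_iff_dvd, Int.modEq_iff_dvd]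
  have h1 := T_two_mul P₁
  have h2 := T_two_mul P₂
  rcases Nat.eq_zero_or_pos (P₁ % 2) with h | h
  · rw [if_pos h] at h1
    rw [if_pos (hpar ▸ h)] at h2
    have e1 : (P₁ : ℤ) = 2 * T P₁ := by exact_mod_cast h1.symm
    have e2 : (P₂ : ℤ) = 2 * T P₂ := by exact_mod_cast h2.symm
    rw [e1, e2, pow_succ, mul_comm ((2:ℤ)^n) 2]
    constructor
    · intro ⟨c, hc⟩; exact ⟨c, by linarith⟩
    · intro ⟨c, hc⟩; exact ⟨c, by linarith⟩
  · have h1' : P₁ % 2 = 1 := by omega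
    rw [if_neg (by omega)] at h1
    rw [if_neg (by omega : ¬ P₂ % 2 = 0)] at h2
    have e1 : (2 : ℤ) * T P₁ = 3 * P₁ + 1 := by exact_mod_cast h1
    have e2 : (2 : ℤ) * T P₂ = 3 * P₂ + 1 := by exact_mod_cast h2
    have cop : IsCoprime ((2:ℤ) ^ (n+1)) 3 := by
      apply IsCoprime.pow_left
      rw [Int.isCoprime_iff_gcd_eq_one]; decide
    constructor
    · intro ⟨c, hc⟩
      apply cop.dvd_of_dvd_mul_right
      exact ⟨c, by linear_combination e1 - e2 + 2 * hc⟩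
    · intro ⟨c, hc⟩
      have : (2:ℤ)^(n+1) ∣ 2 * ((T P₂ : ℤ) - T P₁) := ⟨3 * c, by push_cast at hc ⊢; linarith⟩
      rw [pow_succ, mul_comm ((2:ℤ)^n) 2] at this
      obtain ⟨c, hc⟩ := this
      exact ⟨c, by linarith⟩

lemma main : ∀ n P₁ P₂ : ℕ,
    (∀ k ≤ n, ik k P₁ = ik k P₂) ↔ (P₁ : ℤ) ≡ (P₂ : ℤ) [ZMOD (2 ^ (n + 1) : ℤ)] := by
  intro n
  induction n with
  | zero =>
    intro P₁ P₂
    rw [Int.modEq_iff_dvd, pow_one]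
    constructor
    · intro h
      have := (i0_eq_iff P₁ P₂).mp (h 0 le_rfl)
      omega
    · intro h k hk
      interval_cases k
      have : (2:ℤ) ∣ (P₂ : ℤ) - P₁ := h
      rw [show (ik 0 P₁ = ik 0 P₂) = (i0 P₁ = i0 P₂) from rfl, i0_eq_iff]
      omega
  | succ n IH =>
    intro P₁ P₂
    constructor
    · intro h
      have hpar : P₁ % 2 = P₂ % 2 := (i0_eq_iff P₁ P₂).mp (h 0 (Nat.zero_le _))
      have h' : ∀ k ≤ n, ik k (T P₁) = ik k (T P₂) := by
        intro k hk
        have := h (k + 1) (by omega)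
        simpa [ik, Function.iterate_succ_apply] using this
      exact (key (n + 1) P₁ P₂ hpar).mp ((IH (T P₁) (T P₂)).mp h')
    · intro h
      have hd : (2:ℤ) ∣ (P₂ : ℤ) - P₁ := by
        have := (Int.modEq_iff_dvd.mp h)
        exact dvd_trans ⟨2 ^ (n+1), by ring⟩ this
      have hpar : P₁ % 2 = P₂ % 2 := by omega
      have h' := (IH (T P₁) (T P₂)).mpr ((key (n + 1) P₁ P₂ hpar).mpr h)
      intro k hk
      match k with
      | 0 => exact (i0_eq_iff P₁ P₂).mpr hpar
      | k + 1 =>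
        have := h' k (by omega)
        simpa [ik, Function.iterate_succ_apply] using this

theorem stmt6 (P₁ P₂ : ℕ) (h₁ : 0 < P₁) (h₂ : 0 < P₂) (n : ℕ) (hn : 0 < n)
    (hpar : i0 P₁ = i0 P₂) :
    (∀ k, 1 ≤ k → k ≤ n → ik k P₁ = ik k P₂) ↔
      (P₂ : ℤ) ≡ (P₁ : ℤ) [ZMOD (2 ^ (n + 1) : ℤ)] := by
  constructor
  · intro h
    refine ((main n P₁ P₂).mp ?_).symm
    intro k hk
    match k with
    | 0 => exact hpar
    | k + 1 => exact h (k + 1) (by omega) hk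
  · intro h k hk1 hk2
    exact (main n P₁ P₂).mpr h.symm k hk2
end

section
/- If P₁ and P₂ are positive integers whose parity vectors agree up to index n (i_k(P₁) = i_k(P₂) for all 0 ≤ k ≤ n), then 2^{n+1} divides P₂ − P₁. -/
lemma parity_of_i0 (a b : ℕ) (h : i0 a = i0 b) : a % 2 = b % 2 := by
  unfold i0 at h
  rcases Nat.mod_two_eq_zero_or_one a with ha | ha <;>
  rcases Nat.mod_two_eq_zero_or_one b with hb | hb <;>
    simp [ha, hb] at h ⊢

lemma step (a b : ℕ) (hp : a % 2 = b % 2) :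
    (2:ℤ) * ((T b : ℤ) - (T a : ℤ)) = 3 ^ i0 a * ((b:ℤ) - a) := by
  unfold T i0
  rcases Nat.mod_two_eq_zero_or_one a with ha | ha
  · have hb : b % 2 = 0 := by omega
    have h1 : ((a / 2 : ℕ) : ℤ) * 2 = a := by exact_mod_cast (by omega : a / 2 * 2 = a)
    have h2 : ((b / 2 : ℕ) : ℤ) * 2 = b := by exact_mod_cast (by omega : b / 2 * 2 = b)
    simp only [ha, hb]
    norm_num
    omega
  · have hb : b % 2 = 1 := by omega
    have h1 : (((3 * a + 1) / 2 : ℕ) : ℤ) * 2 = 3 * a + 1 := by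
      exact_mod_cast (by omega : (3 * a + 1) / 2 * 2 = 3 * a + 1)
    have h2 : (((3 * b + 1) / 2 : ℕ) : ℤ) * 2 = 3 * b + 1 := by
      exact_mod_cast (by omega : (3 * b + 1) / 2 * 2 = 3 * b + 1)
    simp only [ha, hb]
    norm_num
    omega

lemma iter_key (P₁ P₂ : ℕ) (n : ℕ) (h : ∀ k ≤ n, ik k P₁ = ik k P₂) :
    ∃ m : ℕ, (3:ℤ)^m * ((P₂:ℤ) - P₁) =
      2 ^ (n+1) * ((T^[n+1] P₂ : ℤ) - (T^[n+1] P₁ : ℤ)) := by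
  induction n with
  | zero =>
    refine ⟨i0 P₁, ?_⟩
    have hp : P₁ % 2 = P₂ % 2 := parity_of_i0 _ _ (h 0 le_rfl)
    have := step P₁ P₂ hp
    simp only [zero_add, Function.iterate_one]
    linarith
  | succ n IH =>
    obtain ⟨m, hm⟩ := IH (fun k hk => h k (le_trans hk (Nat.le_succ n)))
    have hp : (T^[n+1] P₁) % 2 = (T^[n+1] P₂) % 2 :=
      parity_of_i0 _ _ (h (n+1) le_rfl)
    have hs := step (T^[n+1] P₁) (T^[n+1] P₂) hp
    refine ⟨m + i0 (T^[n+1] P₁), ?_⟩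
    rw [pow_add]
    rw [Function.iterate_succ_apply' T (n+1) P₂, Function.iterate_succ_apply' T (n+1) P₁]
    calc (3:ℤ)^m * 3 ^ i0 (T^[n+1] P₁) * ((P₂:ℤ) - P₁)
        = 3 ^ i0 (T^[n+1] P₁) * ((3:ℤ)^m * ((P₂:ℤ) - P₁)) := by ring
      _ = 3 ^ i0 (T^[n+1] P₁) * (2 ^ (n+1) * ((T^[n+1] P₂ : ℤ) - (T^[n+1] P₁ : ℤ))) := by
          rw [hm]
      _ = 2 ^ (n+1) * (3 ^ i0 (T^[n+1] P₁) * ((T^[n+1] P₂ : ℤ) - (T^[n+1] P₁ : ℤ))) := by ring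
      _ = 2 ^ (n+1) * (2 * ((T (T^[n+1] P₂) : ℤ) - (T (T^[n+1] P₁) : ℤ))) := by rw [← hs]
      _ = 2 ^ (n+1+1) * ((T (T^[n+1] P₂) : ℤ) - (T (T^[n+1] P₁) : ℤ)) := by ring

theorem stmt8 (P₁ P₂ : ℕ) (h₁ : 0 < P₁) (h₂ : 0 < P₂) (n : ℕ)
    (h : ∀ k ≤ n, ik k P₁ = ik k P₂) :
    (2 ^ (n + 1) : ℤ) ∣ ((P₂ : ℤ) - (P₁ : ℤ)) := by
  obtain ⟨m, hm⟩ := iter_key P₁ P₂ n h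
  have hdvd : (2 ^ (n+1) : ℤ) ∣ (3:ℤ)^m * ((P₂:ℤ) - P₁) := ⟨_, hm⟩
  have hcop : IsCoprime ((2:ℤ)^(n+1)) ((3:ℤ)^m) := by
    apply IsCoprime.pow
    rw [Int.isCoprime_iff_gcd_eq_one]
    decide
  exact hcop.dvd_of_dvd_mul_left hdvd
end

section
/- The map sending each odd integer P with 1 ≤ P ≤ 2^{n+1}−1 to its parity vector (i_1(P), ..., i_n(P)) ∈ {0,1}^n is a bijection; i.e., among the 2^n odd integers in [1, 2^{n+1}], each of the 2^n possible binary strings of length n occurs exactly once as a parity vector. -/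
lemma T_even {P : ℕ} (h : P % 2 = 0) : 2 * T P = P := by
  unfold T; rw [if_pos h]; omega

lemma T_odd {P : ℕ} (h : P % 2 = 1) : 2 * T P = 3 * P + 1 := by
  unfold T; rw [if_neg (by omega)]; omega

lemma key_s9 : ∀ n P Q : ℕ, (∀ k, k ≤ n → T^[k] P % 2 = T^[k] Q % 2) →
    P % 2 ^ (n + 1) = Q % 2 ^ (n + 1) := by
  intro n
  induction n with
  | zero => intro P Q h; simpa using h 0 le_rfl
  | succ n ih =>
    intro P Q h
    have h0 : P % 2 = Q % 2 := by simpa using h 0 (Nat.zero_le _)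
    have hT : ∀ k, k ≤ n → T^[k] (T P) % 2 = T^[k] (T Q) % 2 := by
      intro k hk
      have := h (k + 1) (by omega)
      rwa [Function.iterate_succ_apply, Function.iterate_succ_apply] at this
    have hmod : T P % 2 ^ (n + 1) = T Q % 2 ^ (n + 1) := ih (T P) (T Q) hT
    have hmod' : T P ≡ T Q [MOD 2 ^ (n + 1)] := hmod
    have h2 : 2 * T P ≡ 2 * T Q [MOD 2 * 2 ^ (n + 1)] := hmod'.mul_left' (c := 2)
    have hpow : 2 * 2 ^ (n + 1) = 2 ^ (n + 2) := by ring
    rw [hpow] at h2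
    rcases Nat.mod_two_eq_zero_or_one P with hp | hp
    · have hq : Q % 2 = 0 := by omega
      rw [T_even hp, T_even hq] at h2
      exact h2
    · have hq : Q % 2 = 1 := by omega
      rw [T_odd hp, T_odd hq] at h2
      have h3 : 3 * P ≡ 3 * Q [MOD 2 ^ (n + 2)] := (Nat.ModEq.add_right_cancel' 1 h2)
      have hcop : Nat.Coprime 3 (2 ^ (n + 2)) :=
        Nat.Coprime.pow_right _ (by decide)
      exact h3.cancel_left_of_coprime hcop.symm

theorem stmt9 (n : ℕ) (hn : 0 < n) :
    Function.Bijective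
      (fun P : {P : ℕ // Odd P ∧ 1 ≤ P ∧ P ≤ 2 ^ (n + 1) - 1} =>
        (fun k : Fin n => if Odd (T^[(k : ℕ) + 1] (P : ℕ)) then (1 : Fin 2) else 0)) := by
  have e : {P : ℕ // Odd P ∧ 1 ≤ P ∧ P ≤ 2 ^ (n + 1) - 1} ≃ Fin (2 ^ n) :=
    { toFun := fun P => ⟨(P.1 - 1) / 2, by
        obtain ⟨⟨m, hm⟩, h1, h2⟩ := P.2
        have : 2 ^ (n + 1) = 2 * 2 ^ n := by ring
        omega⟩
      invFun := fun m => ⟨2 * m.1 + 1, ⟨m.1, by ring⟩, by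
        have hm := m.2
        have : 2 ^ (n + 1) = 2 * 2 ^ n := by ring
        omega⟩
      left_inv := fun P => by
        obtain ⟨⟨m, hm⟩, h1, h2⟩ := P.2
        ext; simp; omega
      right_inv := fun m => by ext; simp }
  haveI : Fintype {P : ℕ // Odd P ∧ 1 ≤ P ∧ P ≤ 2 ^ (n + 1) - 1} := Fintype.ofEquiv _ e.symm
  rw [Fintype.bijective_iff_injective_and_card]
  constructor
  · intro P Q hPQ
    have hpar : ∀ k, k ≤ n → T^[k] (P : ℕ) % 2 = T^[k] (Q : ℕ) % 2 := by
      intro k hk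
      rcases Nat.eq_zero_or_pos k with rfl | hk0
      · simp [Nat.odd_iff.mp P.2.1, Nat.odd_iff.mp Q.2.1]
      · have := congrFun hPQ ⟨k - 1, by omega⟩
        simp only [Nat.sub_add_cancel hk0] at this
        rcases Nat.mod_two_eq_zero_or_one (T^[k] (P : ℕ)) with hp | hp <;>
          rcases Nat.mod_two_eq_zero_or_one (T^[k] (Q : ℕ)) with hq | hq <;>
            simp_all [Nat.odd_iff]
    have hmod := key_s9 n (P : ℕ) (Q : ℕ) hpar
    have hP : (P : ℕ) < 2 ^ (n + 1) := by
      have := P.2.2.2; have : (1:ℕ) ≤ 2 ^ (n+1) := Nat.one_le_two_pow; omega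
    have hQ : (Q : ℕ) < 2 ^ (n + 1) := by
      have := Q.2.2.2; have : (1:ℕ) ≤ 2 ^ (n+1) := Nat.one_le_two_pow; omega
    rw [Nat.mod_eq_of_lt hP, Nat.mod_eq_of_lt hQ] at hmod
    exact Subtype.ext hmod
  · rw [Fintype.card_congr e]
    simp
end
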